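/- If X is Chi-distributed with scale θ and any shape κ > 0 (i.e. has generalized Gamma density with exponent δ = 2), then for any bounded smooth function ψ, Var[ψ(X)] ≤ (θ²/4) E[(ψ'(X))²]. -/

import Mathlib

open MeasureTheory Set Real
open scoped ENNReal

noncomputable def genGammaDensity (θ κ δ x : ℝ) : ℝ :=
  (δ / θ ^ κ) * (1 / Real.Gamma (κ / δ)) * x ^ (κ - 1) * Real.exp (-(x / θ) ^ δ)

section
variable {θ κ : ℝ}

lemma gg_eq (hθ : 0 < θ) {x : ℝ} (hx : 0 < x) :
    genGammaDensity θ κ 2 x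
      = (2 / (θ ^ κ * Real.Gamma (κ/2))) * (x ^ (κ-1) * Real.exp (-(θ^2)⁻¹ * x ^ (2:ℝ))) := by
  unfold genGammaDensity
  have h2 : ((2:ℕ):ℝ) = (2:ℝ) := by norm_num
  have hdiv : (x / θ) ^ (2:ℝ) = x ^ (2:ℝ) / θ^2 := by
    rw [Real.div_rpow hx.le hθ.le, ← h2, Real.rpow_natCast θ 2]
  rw [hdiv]
  have : -(x ^ (2:ℝ) / θ ^ 2) = -(θ^2)⁻¹ * x ^ (2:ℝ) := by ring
  rw [this]
  ring

lemma gg_pos (hθ : 0 < θ) (hκ : 0 < κ) {x : ℝ} (hx : 0 < x) :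
    0 < genGammaDensity θ κ 2 x := by
  rw [gg_eq hθ hx]
  have h1 : 0 < Real.Gamma (κ/2) := Real.Gamma_pos_of_pos (by linarith)
  have h2 : 0 < θ ^ κ := Real.rpow_pos_of_pos hθ κ
  have h3 : 0 < x ^ (κ-1) := Real.rpow_pos_of_pos hx _
  positivity

lemma gg_integral (hθ : 0 < θ) (hκ : 0 < κ) :
    ∫ x in Ioi (0:ℝ), genGammaDensity θ κ 2 x = 1 := by
  have hb : 0 < (θ^2)⁻¹ := by positivity
  rw [setIntegral_congr_fun measurableSet_Ioi (fun x hx => gg_eq hθ hx)]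
  rw [integral_const_mul, integral_rpow_mul_exp_neg_mul_rpow two_pos (by linarith) hb]
  have hΓ : Real.Gamma (κ/2) ≠ 0 := (Real.Gamma_pos_of_pos (by linarith)).ne'
  have hθκ : (0:ℝ) < θ ^ κ := Real.rpow_pos_of_pos hθ κ
  have hpow : ((θ^2)⁻¹ : ℝ) ^ (-(κ - 1 + 1) / 2) = θ ^ κ := by
    rw [← Real.rpow_natCast θ 2, ← Real.rpow_neg_one, ← Real.rpow_mul hθ.le,
      ← Real.rpow_mul hθ.le]
    norm_num
    congr 1
    ring
  rw [hpow]
  have : κ - 1 + 1 = κ := by ring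
  rw [this]
  field_simp

lemma gg_sq_eq (hθ : 0 < θ) {x : ℝ} (hx : 0 < x) :
    x^2 * genGammaDensity θ κ 2 x
      = (2 / (θ ^ κ * Real.Gamma (κ/2))) * (x ^ (κ+1) * Real.exp (-(θ^2)⁻¹ * x ^ (2:ℝ))) := by
  rw [gg_eq hθ hx]
  have : x ^ (κ+1) = x^2 * x ^ (κ-1) := by
    rw [← Real.rpow_natCast x 2, ← Real.rpow_add hx]
    norm_num
    congr 1
    ring
  rw [this]; ring

lemma gg_integrableOn (hθ : 0 < θ) (hκ : 0 < κ) :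
    IntegrableOn (genGammaDensity θ κ 2) (Ioi 0) := by
  have h := (integrableOn_rpow_mul_exp_neg_mul_rpow (p := 2) (s := κ-1) (b := (θ^2)⁻¹)
    (by linarith) two_pos (by positivity)).const_mul (2 / (θ ^ κ * Real.Gamma (κ/2)))
  exact MeasureTheory.IntegrableOn.congr_fun h (fun x hx => (gg_eq hθ hx).symm) measurableSet_Ioi

lemma gg_sq_integrableOn (hθ : 0 < θ) (hκ : 0 < κ) :
    IntegrableOn (fun x => x^2 * genGammaDensity θ κ 2 x) (Ioi 0) := by
  have h := (integrableOn_rpow_mul_exp_neg_mul_rpow (p := 2) (s := κ+1) (b := (θ^2)⁻¹)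
    (by linarith) two_pos (by positivity)).const_mul (2 / (θ ^ κ * Real.Gamma (κ/2)))
  exact MeasureTheory.IntegrableOn.congr_fun h (fun x hx => (gg_sq_eq hθ hx).symm) measurableSet_Ioi

lemma gg_moment2 (hθ : 0 < θ) (hκ : 0 < κ) :
    ∫ x in Ioi (0:ℝ), x^2 * genGammaDensity θ κ 2 x = κ * θ^2 / 2 := by
  have hb : 0 < ((θ^2)⁻¹:ℝ) := by positivity
  rw [setIntegral_congr_fun measurableSet_Ioi (fun x hx => gg_sq_eq hθ hx)]
  rw [integral_const_mul, integral_rpow_mul_exp_neg_mul_rpow two_pos (by linarith) hb]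
  have hΓ : (0:ℝ) < Real.Gamma (κ/2) := Real.Gamma_pos_of_pos (by linarith)
  have hθκ : (0:ℝ) < θ ^ κ := Real.rpow_pos_of_pos hθ κ
  have hpow : ((θ^2)⁻¹ : ℝ) ^ (-(κ + 1 + 1) / 2) = θ ^ κ * θ ^ 2 := by
    rw [← Real.rpow_natCast θ 2, ← Real.rpow_neg_one, ← Real.rpow_mul hθ.le,
      ← Real.rpow_mul hθ.le, ← Real.rpow_add hθ]
    norm_num
    congr 1
    ring
  have hΓ2 : Real.Gamma ((κ + 1 + 1)/2) = (κ/2) * Real.Gamma (κ/2) := by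
    have : (κ + 1 + 1)/2 = κ/2 + 1 := by ring
    rw [this, Real.Gamma_add_one (by positivity)]
  rw [hpow, hΓ2]
  field_simp

lemma rpow_two_eq {x : ℝ} : x ^ (2:ℝ) = x^2 := by
  rw [show (2:ℝ) = ((2:ℕ):ℝ) by norm_num, Real.rpow_natCast]

lemma rpow_split {t : ℝ} {κ : ℝ} (ht : 0 < t) : t ^ κ = t * t ^ (κ-1) := by
  have h1 : κ = 1 + (κ - 1) := by ring
  calc t ^ κ = t ^ (1+(κ-1)) := by rw [← h1]
    _ = t * t^(κ-1) := by rw [Real.rpow_add ht, Real.rpow_one]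

lemma gg_hasDerivAt (hθ : 0 < θ) (hκ : 0 < κ) {x : ℝ} (hx : 0 < x) :
    HasDerivAt (fun t => θ^2/2 * (t * genGammaDensity θ κ 2 t))
      ((κ*θ^2/2 - x^2) * genGammaDensity θ κ 2 x) x := by
  set c : ℝ := 2 / (θ ^ κ * Real.Gamma (κ/2)) with hc
  set b : ℝ := (θ^2)⁻¹ with hb
  have hbpos : 0 < b := by positivity
  have h1 : HasDerivAt (fun t : ℝ => t ^ κ) (κ * x^(κ-1)) x :=
    Real.hasDerivAt_rpow_const (Or.inl hx.ne')
  have h2 : HasDerivAt (fun t : ℝ => Real.exp (-b * t^2))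
      (Real.exp (-b * x^2) * (-b * (2 * x^1))) x := by
    have := ((hasDerivAt_pow 2 x).const_mul (-b)).exp
    simpa using this
  have h3 := ((h1.mul h2).const_mul (θ^2/2 * c))
  have heq : (fun t => θ^2/2 * (t * genGammaDensity θ κ 2 t))
      =ᶠ[nhds x] (fun t => θ^2/2 * c * (t ^ κ * Real.exp (-b * t^2))) := by
    filter_upwards [isOpen_Ioi.mem_nhds hx] with t ht
    rw [gg_eq hθ ht, rpow_two_eq]
    have htt := rpow_split (κ := κ) (t := t) ht
    rw [htt]; ring
  have hval : θ^2/2 * c * (κ * x^(κ-1) * Real.exp (-b * x^2)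
        + x ^ κ * (Real.exp (-b * x^2) * (-b * (2 * x^1))))
      = (κ*θ^2/2 - x^2) * genGammaDensity θ κ 2 x := by
    rw [gg_eq hθ hx, rpow_two_eq]
    have htt := rpow_split (κ := κ) (t := x) hx
    rw [htt]
    have hbθ : θ^2 * b = 1 := mul_inv_cancel₀ (by positivity)
    linear_combination (-(c * Real.exp (-b*x^2) * x^(κ-1) * x^2)) * hbθ
  exact (hval ▸ h3).congr_of_eventuallyEq heq

lemma gg_tendsto_zero (hθ : 0 < θ) (hκ : 0 < κ) :
    Filter.Tendsto (fun t => θ^2/2 * (t * genGammaDensity θ κ 2 t)) Filter.atTop (nhds 0) := by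
  set c : ℝ := 2 / (θ ^ κ * Real.Gamma (κ/2)) with hc
  set b : ℝ := (θ^2)⁻¹ with hb
  have hbpos : 0 < b := by positivity
  have h1 : Filter.Tendsto (fun u : ℝ => u ^ (κ/2) * Real.exp (-b * u))
      Filter.atTop (nhds 0) := tendsto_rpow_mul_exp_neg_mul_atTop_nhds_zero (κ/2) b hbpos
  have h2 : Filter.Tendsto (fun t : ℝ => t^2) Filter.atTop Filter.atTop :=
    Filter.tendsto_pow_atTop two_ne_zero
  have h3 := (h1.comp h2).const_mul (θ^2/2 * c)
  rw [mul_zero] at h3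
  apply h3.congr'
  filter_upwards [Filter.eventually_gt_atTop (0:ℝ)] with t ht
  have htt := rpow_split (κ := κ) (t := t) ht
  have hsq : ((t^2 : ℝ)) ^ (κ/2) = t ^ κ := by
    rw [← rpow_two_eq, ← Real.rpow_mul ht.le]
    congr 1
    ring
  simp only [Function.comp]
  rw [hsq, gg_eq hθ ht, rpow_two_eq, htt]
  ring

lemma gg_tail (hθ : 0 < θ) (hκ : 0 < κ) {s : ℝ} (hs : 0 < s) :
    ∫ x in Ioi s, (x^2 - κ*θ^2/2) * genGammaDensity θ κ 2 x
      = θ^2/2 * (s * genGammaDensity θ κ 2 s) := by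
  have hint : IntegrableOn (fun x => (κ*θ^2/2 - x^2) * genGammaDensity θ κ 2 x) (Ioi s) := by
    have h := ((gg_integrableOn hθ hκ).const_mul (κ*θ^2/2)).sub (gg_sq_integrableOn hθ hκ)
    have h2 := MeasureTheory.IntegrableOn.mono_set h (Ioi_subset_Ioi hs.le)
    apply MeasureTheory.IntegrableOn.congr_fun_ae h2
    filter_upwards with x
    simp only [Pi.sub_apply]
    ring
  have key := integral_Ioi_of_hasDerivAt_of_tendsto'
    (f := fun t => θ^2/2 * (t * genGammaDensity θ κ 2 t))
    (f' := fun x => (κ*θ^2/2 - x^2) * genGammaDensity θ κ 2 x)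
    (fun x hxm => gg_hasDerivAt hθ hκ (lt_of_lt_of_le hs hxm))
    hint (gg_tendsto_zero hθ hκ)
  have : (fun x => (x^2 - κ*θ^2/2) * genGammaDensity θ κ 2 x)
      = fun x => -((κ*θ^2/2 - x^2) * genGammaDensity θ κ 2 x) := by
    funext x; ring
  rw [this, integral_neg, key]
  ring

lemma integral_cs {α : Type*} {m : MeasurableSpace α} {μ : Measure α} {f g : α → ℝ}
    (hf2 : Integrable (fun x => f x ^ 2) μ) (hg2 : Integrable (fun x => g x ^ 2) μ)
    (hfg : Integrable (fun x => f x * g x) μ) :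
    (∫ x, f x * g x ∂μ)^2 ≤ (∫ x, f x ^ 2 ∂μ) * (∫ x, g x ^ 2 ∂μ) := by
  set A := ∫ x, f x ^ 2 ∂μ with hA'
  set B := ∫ x, f x * g x ∂μ with hB'
  set C := ∫ x, g x ^ 2 ∂μ with hC'
  have hA : 0 ≤ A := integral_nonneg fun x => sq_nonneg _
  have hC : 0 ≤ C := integral_nonneg fun x => sq_nonneg _
  have key : ∀ t : ℝ, 0 ≤ A + 2*t*B + t^2*C := by
    intro t
    have h0 : 0 ≤ ∫ x, (f x + t * g x)^2 ∂μ := integral_nonneg fun x => sq_nonneg _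
    have heq : ∫ x, (f x + t * g x)^2 ∂μ = A + 2*t*B + t^2*C := by
      have hfe : (fun x => (f x + t * g x)^2)
          = fun x => (f x ^2 + (2*t) * (f x * g x)) + t^2 * g x ^2 := by funext x; ring
      have i1 : Integrable (fun x => 2*t*(f x * g x)) μ := hfg.const_mul _
      have i2 : Integrable (fun x => f x^2 + 2*t*(f x*g x)) μ := hf2.add i1
      have i3 : Integrable (fun x => t^2 * g x^2) μ := hg2.const_mul _
      rw [hfe, integral_add i2 i3, integral_add hf2 i1, integral_const_mul, integral_const_mul]
    linarith
  rcases hC.eq_or_lt with hC0 | hC0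
  · have hB : B = 0 := by
      by_contra hB
      have h1 := key (-(A+1)/(2*B))
      rw [← hC0] at h1
      have h2 : 2*(-(A+1)/(2*B))*B = -(A+1) := by field_simp
      rw [h2] at h1
      nlinarith
    rw [hB]
    nlinarith
  · have h1 := key (-(B/C))
    have h2 : A + 2*(-(B/C))*B + (-(B/C))^2*C = A - B^2/C := by
      field_simp
      ring
    rw [h2] at h1
    rw [← sub_nonneg]
    have h3 : A*C - B^2 = (A - B^2/C)*C := by field_simp
    rw [h3]
    positivity

lemma sq_sub_le {ψ : ℝ → ℝ} (hψ : ContDiff ℝ (⊤ : ℕ∞) ψ) {x y : ℝ} (hy : 0 < y) (hxy : y < x) :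
    (ψ x - ψ y)^2 ≤ (x^2 - y^2) * ∫ s in Ioc y x, (deriv ψ s)^2 / (2*s) := by
  have hψ' : Continuous (deriv ψ) := hψ.continuous_deriv (by simp)
  have hftc : ∫ s in Ioc y x, deriv ψ s = ψ x - ψ y := by
    rw [← intervalIntegral.integral_of_le hxy.le]
    exact intervalIntegral.integral_deriv_eq_sub
      (fun s _ => (hψ.differentiable (by simp)).differentiableAt) (hψ'.intervalIntegrable y x)
  set f : ℝ → ℝ := fun s => Real.sqrt (2*s) with hf
  set g : ℝ → ℝ := fun s => deriv ψ s / Real.sqrt (2*s) with hg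
  have hsub : Icc y x ⊆ Ioi (0:ℝ) := fun s hs => lt_of_lt_of_le hy hs.1
  have hfc : Continuous f := Real.continuous_sqrt.comp (by continuity)
  have hgc : ContinuousOn g (Icc y x) := by
    apply (hψ'.continuousOn).div hfc.continuousOn
    intro s hs
    exact (Real.sqrt_pos.mpr (by have := hsub hs; simp only [mem_Ioi] at this; linarith)).ne'
  have hi1 : Integrable (fun s => f s ^ 2) (volume.restrict (Ioc y x)) := by
    apply MeasureTheory.IntegrableOn.mono_set _ Ioc_subset_Icc_self
    exact ((hfc.continuousOn).pow 2).integrableOn_Icc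
  have hi2 : Integrable (fun s => g s ^ 2) (volume.restrict (Ioc y x)) := by
    apply MeasureTheory.IntegrableOn.mono_set _ Ioc_subset_Icc_self
    exact (hgc.pow 2).integrableOn_Icc
  have hi3 : Integrable (fun s => f s * g s) (volume.restrict (Ioc y x)) := by
    apply MeasureTheory.IntegrableOn.mono_set _ Ioc_subset_Icc_self
    exact (hfc.continuousOn.mul hgc).integrableOn_Icc
  have hcs := integral_cs hi1 hi2 hi3
  have e1 : ∫ s in Ioc y x, f s * g s = ψ x - ψ y := by
    rw [← hftc]
    apply setIntegral_congr_fun measurableSet_Ioc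
    intro s hs
    have hs0 : 0 < 2*s := by have := hy.trans hs.1; linarith
    simp only [hf, hg]
    rw [mul_comm, div_mul_cancel₀ _ (Real.sqrt_pos.mpr hs0).ne']
  have e2 : ∫ s in Ioc y x, f s ^ 2 = x^2 - y^2 := by
    have : ∫ s in Ioc y x, f s ^ 2 = ∫ s in Ioc y x, 2*s := by
      apply setIntegral_congr_fun measurableSet_Ioc
      intro s hs
      have hs0 : 0 ≤ 2*s := by have := hy.trans hs.1; linarith
      simp only [hf]
      rw [Real.sq_sqrt hs0]
    rw [this, ← intervalIntegral.integral_of_le hxy.le,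
      intervalIntegral.integral_const_mul, integral_id]
    ring
  have e3 : ∫ s in Ioc y x, g s ^ 2 = ∫ s in Ioc y x, (deriv ψ s)^2 / (2*s) := by
    apply setIntegral_congr_fun measurableSet_Ioc
    intro s hs
    have hs0 : 0 < 2*s := by have := hy.trans hs.1; linarith
    simp only [hg]
    rw [div_pow, Real.sq_sqrt hs0.le]
  rw [e1, e2, e3] at hcs
  exact hcs

lemma split_integral {h : ℝ → ℝ} (hint : IntegrableOn h (Ioi (0:ℝ))) {s : ℝ} (hs : 0 < s) :
    ∫ x in Ioi (0:ℝ), h x = (∫ x in Ioo (0:ℝ) s, h x) + ∫ x in Ici s, h x := by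
  have hd : Disjoint (Ioo (0:ℝ) s) (Ici s) :=
    Set.disjoint_left.mpr fun a ha hb => absurd hb (not_le.mpr ha.2)
  rw [← Ioo_union_Ici_eq_Ioi hs]
  exact setIntegral_union hd measurableSet_Ici
    (hint.mono_set fun a ha => ha.1) (hint.mono_set fun a ha => lt_of_lt_of_le hs ha)

lemma tail_calc (hθ : 0 < θ) (hκ : 0 < κ) {s : ℝ} (hs : 0 < s) :
    (∫ x in Ici s, x^2 * genGammaDensity θ κ 2 x)
      - (κ*θ^2/2) * ∫ x in Ici s, genGammaDensity θ κ 2 x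
      = θ^2/2 * (s * genGammaDensity θ κ 2 s) := by
  have h1 : IntegrableOn (fun x => x^2 * genGammaDensity θ κ 2 x) (Ioi s) :=
    (gg_sq_integrableOn hθ hκ).mono_set (Ioi_subset_Ioi hs.le)
  have h2 : IntegrableOn (genGammaDensity θ κ 2) (Ioi s) :=
    (gg_integrableOn hθ hκ).mono_set (Ioi_subset_Ioi hs.le)
  rw [integral_Ici_eq_integral_Ioi, integral_Ici_eq_integral_Ioi, ← gg_tail hθ hκ hs]
  rw [← integral_const_mul, ← integral_sub h1 (h2.const_mul _)]
  congr 1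
  funext x
  ring

lemma inner_double (hθ : 0 < θ) (hκ : 0 < κ) {q : ℝ → ℝ≥0∞} (hq : Measurable q)
    {s : ℝ} (hs : 0 < s) :
    (∫⁻ x in Ioi (0:ℝ), ∫⁻ y in Ioi (0:ℝ),
      ({u : ℝ × ℝ × ℝ | min u.1 u.2.1 < u.2.2 ∧ u.2.2 ≤ max u.1 u.2.1}.indicator
        (fun v => ENNReal.ofReal (genGammaDensity θ κ 2 v.1)
          * ENNReal.ofReal (genGammaDensity θ κ 2 v.2.1)
          * ENNReal.ofReal (|v.1^2 - v.2.1^2|) * q v.2.2) (x, y, s)))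
      ≤ q s * ENNReal.ofReal (θ^2 * (s * genGammaDensity θ κ 2 s)) := by
  classical
  set p : ℝ → ℝ := genGammaDensity θ κ 2 with hp
  set aI : ℝ := ∫ y in Ioo (0:ℝ) s, p y with haI
  set bI : ℝ := ∫ y in Ioo (0:ℝ) s, y^2 * p y with hbI
  set A : ℝ := ∫ y in Ici s, p y with hA
  set B2 : ℝ := ∫ y in Ici s, y^2 * p y with hB2
  have hpnn : ∀ x ∈ Ioi (0:ℝ), 0 ≤ p x := fun x hx => (gg_pos hθ hκ hx).le
  have hIp : IntegrableOn p (Ioi (0:ℝ)) := gg_integrableOn hθ hκ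
  have hIp2 : IntegrableOn (fun x => x^2 * p x) (Ioi (0:ℝ)) := gg_sq_integrableOn hθ hκ
  have hIoo_sub : Ioo (0:ℝ) s ⊆ Ioi 0 := fun a ha => ha.1
  have hIci_sub : Ici s ⊆ Ioi (0:ℝ) := fun a ha => lt_of_lt_of_le hs ha
  -- key inequalities between the pieces
  have hbIle : bI ≤ s^2 * aI := by
    rw [haI, hbI, ← integral_const_mul]
    apply setIntegral_mono_on (hIp2.mono_set hIoo_sub)
      ((hIp.mono_set hIoo_sub).const_mul _) measurableSet_Ioo
    intro y hy
    have h1 := hpnn y (hIoo_sub hy)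
    have h2 : y^2 ≤ s^2 := by nlinarith [hy.1, hy.2]
    exact mul_le_mul_of_nonneg_right h2 h1
  have hB2ge : s^2 * A ≤ B2 := by
    rw [hA, hB2, ← integral_const_mul]
    apply setIntegral_mono_on ((hIp.mono_set hIci_sub).const_mul _)
      (hIp2.mono_set hIci_sub) measurableSet_Ici
    intro y hy
    have h1 := hpnn y (hIci_sub hy)
    have h2 : s^2 ≤ y^2 := pow_le_pow_left₀ hs.le (hy : s ≤ y) 2
    exact mul_le_mul_of_nonneg_right h2 h1
  have hvalue : aI * B2 - bI * A = θ^2/2 * (s * p s) := by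
    have hsplit1 : aI + A = 1 := by
      rw [haI, hA, ← split_integral hIp hs, gg_integral hθ hκ]
    have hsplit2 : bI + B2 = κ*θ^2/2 := by
      rw [hbI, hB2, ← split_integral hIp2 hs, gg_moment2 hθ hκ]
    have htail := tail_calc hθ hκ hs
    have haIe : aI = 1 - A := by linarith
    have hbIe : bI = κ*θ^2/2 - B2 := by linarith
    rw [haIe, hbIe]
    rw [← hp, ← hA, ← hB2] at htail
    linear_combination htail
  have hpm : Measurable p := by rw [hp]; unfold genGammaDensity; fun_prop
  have hAnn : 0 ≤ A := setIntegral_nonneg measurableSet_Ici (fun y hy => hpnn y (hIci_sub hy))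
  have haInn : 0 ≤ aI := setIntegral_nonneg measurableSet_Ioo (fun y hy => hpnn y (hIoo_sub hy))
  set P : ℝ → ℝ≥0∞ := fun x => ENNReal.ofReal (p x) with hP
  have hinner : ∀ x ∈ Ioi (0:ℝ),
      (∫⁻ y in Ioi (0:ℝ), ({u : ℝ × ℝ × ℝ | min u.1 u.2.1 < u.2.2 ∧ u.2.2 ≤ max u.1 u.2.1}.indicator
        (fun v => ENNReal.ofReal (genGammaDensity θ κ 2 v.1)
          * ENNReal.ofReal (genGammaDensity θ κ 2 v.2.1)
          * ENNReal.ofReal (|v.1^2 - v.2.1^2|) * q v.2.2) (x, y, s)))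
      = (P x * q s) * (if s ≤ x then ENNReal.ofReal (x^2*aI - bI)
          else ENNReal.ofReal (B2 - x^2*A)) := by
    intro x hx
    simp only [mem_Ioi] at hx
    by_cases hsx : s ≤ x
    · rw [if_pos hsx]
      have e1 : ∀ᵐ y ∂(volume.restrict (Ioi (0:ℝ))),
          ({u : ℝ × ℝ × ℝ | min u.1 u.2.1 < u.2.2 ∧ u.2.2 ≤ max u.1 u.2.1}.indicator
            (fun v => ENNReal.ofReal (genGammaDensity θ κ 2 v.1)
              * ENNReal.ofReal (genGammaDensity θ κ 2 v.2.1)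
              * ENNReal.ofReal (|v.1^2 - v.2.1^2|) * q v.2.2) (x, y, s))
          = (P x * q s) * (Iio s).indicator (fun y => ENNReal.ofReal (p y * (x^2-y^2))) y := by
        rw [ae_restrict_iff' measurableSet_Ioi]
        apply Filter.Eventually.of_forall
        intro y hy
        simp only [mem_Ioi] at hy
        by_cases hys : y < s
        · have hyx : y ≤ x := le_trans hys.le hsx
          have hmem : (x,y,s) ∈ {u : ℝ × ℝ × ℝ | min u.1 u.2.1 < u.2.2 ∧ u.2.2 ≤ max u.1 u.2.1} := by
            simp only [mem_setOf_eq, min_eq_right hyx, max_eq_left hyx]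
            exact ⟨hys, hsx⟩
          rw [Set.indicator_of_mem hmem, Set.indicator_of_mem (mem_Iio.mpr hys)]
          simp only []
          rw [abs_of_nonneg (by nlinarith : (0:ℝ) ≤ x^2 - y^2),
            ENNReal.ofReal_mul (hpnn y hy)]
          rw [← hp]
          ring
        · have hnmem : (x,y,s) ∉ {u : ℝ × ℝ × ℝ | min u.1 u.2.1 < u.2.2 ∧ u.2.2 ≤ max u.1 u.2.1} := by
            simp only [mem_setOf_eq, not_and]
            intro hc
            exact absurd hc (not_lt.mpr (le_min hsx (not_lt.mp hys)))
          rw [Set.indicator_of_notMem hnmem, Set.indicator_of_notMem (by simpa using hys)]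
          rw [mul_zero]
      rw [lintegral_congr_ae e1,
        lintegral_const_mul _ (Measurable.indicator ((hpm.fun_mul (g := fun y : ℝ => x^2 - y^2) (by fun_prop)).ennreal_ofReal)
          measurableSet_Iio),
        lintegral_indicator measurableSet_Iio,
        Measure.restrict_restrict measurableSet_Iio, Set.Iio_inter_Ioi]
      congr 1
      have hint : Integrable (fun y => p y * (x^2 - y^2)) (volume.restrict (Ioo (0:ℝ) s)) := by
        apply (Integrable.sub ((hIp.mono_set hIoo_sub).const_mul (x^2))
          (hIp2.mono_set hIoo_sub)).congr
        apply Filter.Eventually.of_forall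
        intro y
        simp only [Pi.sub_apply]
        ring
      have hnn : 0 ≤ᵐ[volume.restrict (Ioo (0:ℝ) s)] (fun y => p y * (x^2 - y^2)) := by
        filter_upwards [ae_restrict_mem measurableSet_Ioo] with y hy
        have h1 := hpnn y (hIoo_sub hy)
        have h2 : (0:ℝ) ≤ x^2 - y^2 := by nlinarith [hy.1, hy.2]
        exact mul_nonneg h1 h2
      rw [← ofReal_integral_eq_lintegral_ofReal hint hnn]
      congr 1
      rw [haI, hbI, ← integral_const_mul, ← integral_sub ((hIp.mono_set hIoo_sub).const_mul _)
        (hIp2.mono_set hIoo_sub)]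
      apply setIntegral_congr_fun measurableSet_Ioo
      intro y _
      ring
    · rw [if_neg hsx]
      have hxs : x < s := not_le.mp hsx
      have e1 : ∀ᵐ y ∂(volume.restrict (Ioi (0:ℝ))),
          ({u : ℝ × ℝ × ℝ | min u.1 u.2.1 < u.2.2 ∧ u.2.2 ≤ max u.1 u.2.1}.indicator
            (fun v => ENNReal.ofReal (genGammaDensity θ κ 2 v.1)
              * ENNReal.ofReal (genGammaDensity θ κ 2 v.2.1)
              * ENNReal.ofReal (|v.1^2 - v.2.1^2|) * q v.2.2) (x, y, s))
          = (P x * q s) * (Ici s).indicator (fun y => ENNReal.ofReal (p y * (y^2-x^2))) y := by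
        rw [ae_restrict_iff' measurableSet_Ioi]
        apply Filter.Eventually.of_forall
        intro y hy
        simp only [mem_Ioi] at hy
        by_cases hys : s ≤ y
        · have hxy : x ≤ y := le_trans hxs.le hys
          have hmem : (x,y,s) ∈ {u : ℝ × ℝ × ℝ | min u.1 u.2.1 < u.2.2 ∧ u.2.2 ≤ max u.1 u.2.1} := by
            simp only [mem_setOf_eq, min_eq_left hxy, max_eq_right hxy]
            exact ⟨hxs, hys⟩
          rw [Set.indicator_of_mem hmem, Set.indicator_of_mem (mem_Ici.mpr hys)]
          simp only []
          rw [abs_of_nonpos (by nlinarith : x^2 - y^2 ≤ (0:ℝ)), neg_sub,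
            ENNReal.ofReal_mul (hpnn y hy)]
          rw [← hp]
          ring
        · have hnmem : (x,y,s) ∉ {u : ℝ × ℝ × ℝ | min u.1 u.2.1 < u.2.2 ∧ u.2.2 ≤ max u.1 u.2.1} := by
            simp only [mem_setOf_eq, not_and]
            intro _
            exact fun hc => absurd hc (not_le.mpr (max_lt hxs (not_le.mp hys)))
          rw [Set.indicator_of_notMem hnmem, Set.indicator_of_notMem (by simpa using hys)]
          rw [mul_zero]
      rw [lintegral_congr_ae e1,
        lintegral_const_mul _ (Measurable.indicator ((hpm.fun_mul (g := fun y : ℝ => y^2 - x^2) (by fun_prop)).ennreal_ofReal)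
          measurableSet_Ici),
        lintegral_indicator measurableSet_Ici,
        Measure.restrict_restrict measurableSet_Ici, inter_eq_left.mpr hIci_sub]
      congr 1
      have hint : Integrable (fun y => p y * (y^2 - x^2)) (volume.restrict (Ici s)) := by
        apply (Integrable.sub (hIp2.mono_set hIci_sub)
          ((hIp.mono_set hIci_sub).const_mul (x^2))).congr
        apply Filter.Eventually.of_forall
        intro y
        simp only [Pi.sub_apply]
        ring
      have hnn : 0 ≤ᵐ[volume.restrict (Ici s)] (fun y => p y * (y^2 - x^2)) := by
        filter_upwards [ae_restrict_mem measurableSet_Ici] with y hy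
        have h1 := hpnn y (hIci_sub hy)
        have h2 : (0:ℝ) ≤ y^2 - x^2 := by nlinarith [lt_of_lt_of_le hxs (mem_Ici.mp hy), hx]
        exact mul_nonneg h1 h2
      rw [← ofReal_integral_eq_lintegral_ofReal hint hnn]
      congr 1
      rw [hA, hB2, ← integral_const_mul, ← integral_sub (hIp2.mono_set hIci_sub)
        ((hIp.mono_set hIci_sub).const_mul _)]
      apply setIntegral_congr_fun measurableSet_Ici
      intro y _
      ring
  rw [setLIntegral_congr_fun measurableSet_Ioi hinner]
  have hout : ∀ x ∈ Ioi (0:ℝ), (P x * q s) * (if s ≤ x then ENNReal.ofReal (x^2*aI - bI)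
        else ENNReal.ofReal (B2 - x^2*A))
      = q s * ((Ici s).indicator (fun x => ENNReal.ofReal (p x * (x^2*aI - bI))) x
             + (Iio s).indicator (fun x => ENNReal.ofReal (p x * (B2 - x^2*A))) x) := by
    intro x hx
    by_cases hsx : s ≤ x
    · rw [if_pos hsx, Set.indicator_of_mem (mem_Ici.mpr hsx),
        Set.indicator_of_notMem (by simpa using hsx), ENNReal.ofReal_mul (hpnn x hx)]
      rw [add_zero]
      ring
    · rw [if_neg hsx, Set.indicator_of_notMem (by simpa using hsx),
        Set.indicator_of_mem (mem_Iio.mpr (not_le.mp hsx)), ENNReal.ofReal_mul (hpnn x hx)]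
      rw [zero_add]
      ring
  rw [setLIntegral_congr_fun measurableSet_Ioi hout]
  have hm1 : Measurable fun x => (Ici s).indicator
      (fun x => ENNReal.ofReal (p x * (x^2*aI - bI))) x :=
    Measurable.indicator ((hpm.fun_mul (g := fun x : ℝ => x^2*aI - bI) (by fun_prop)).ennreal_ofReal) measurableSet_Ici
  have hm2 : Measurable fun x => (Iio s).indicator
      (fun x => ENNReal.ofReal (p x * (B2 - x^2*A))) x :=
    Measurable.indicator ((hpm.fun_mul (g := fun x : ℝ => B2 - x^2*A) (by fun_prop)).ennreal_ofReal) measurableSet_Iio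
  rw [lintegral_const_mul _ (hm1.fun_add hm2), lintegral_add_left hm1,
    lintegral_indicator measurableSet_Ici, lintegral_indicator measurableSet_Iio,
    Measure.restrict_restrict measurableSet_Ici, Measure.restrict_restrict measurableSet_Iio,
    Set.Iio_inter_Ioi, inter_eq_left.mpr hIci_sub]
  have hi1 : Integrable (fun x => p x * (x^2*aI - bI)) (volume.restrict (Ici s)) := by
    apply (Integrable.sub ((hIp2.mono_set hIci_sub).const_mul aI)
      ((hIp.mono_set hIci_sub).const_mul bI)).congr
    apply Filter.Eventually.of_forall
    intro y
    simp only [Pi.sub_apply]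
    ring
  have hn1 : 0 ≤ᵐ[volume.restrict (Ici s)] (fun x => p x * (x^2*aI - bI)) := by
    filter_upwards [ae_restrict_mem measurableSet_Ici] with x hx
    have h1 := hpnn x (hIci_sub hx)
    have h2 : s^2 ≤ x^2 := pow_le_pow_left₀ hs.le (mem_Ici.mp hx) 2
    have h3 : (0:ℝ) ≤ x^2*aI - bI := by nlinarith
    exact mul_nonneg h1 h3
  have hi2 : Integrable (fun x => p x * (B2 - x^2*A)) (volume.restrict (Ioo (0:ℝ) s)) := by
    apply (Integrable.sub ((hIp.mono_set hIoo_sub).const_mul B2)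
      ((hIp2.mono_set hIoo_sub).const_mul A)).congr
    apply Filter.Eventually.of_forall
    intro y
    simp only [Pi.sub_apply]
    ring
  have hn2 : 0 ≤ᵐ[volume.restrict (Ioo (0:ℝ) s)] (fun x => p x * (B2 - x^2*A)) := by
    filter_upwards [ae_restrict_mem measurableSet_Ioo] with x hx
    have h1 := hpnn x (hIoo_sub hx)
    have h2 : x^2 ≤ s^2 := by nlinarith [hx.1, hx.2]
    have h3 : (0:ℝ) ≤ B2 - x^2*A := by nlinarith
    exact mul_nonneg h1 h3
  rw [← ofReal_integral_eq_lintegral_ofReal hi1 hn1, ← ofReal_integral_eq_lintegral_ofReal hi2 hn2]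
  have hv1 : ∫ x in Ici s, p x * (x^2*aI - bI) = aI*B2 - bI*A := by
    rw [hA, hB2, ← integral_const_mul, ← integral_const_mul,
      ← integral_sub ((hIp2.mono_set hIci_sub).const_mul _) ((hIp.mono_set hIci_sub).const_mul _)]
    apply setIntegral_congr_fun measurableSet_Ici
    intro y _
    ring
  have hv2 : ∫ x in Ioo (0:ℝ) s, p x * (B2 - x^2*A) = B2*aI - A*bI := by
    rw [haI, hbI, ← integral_const_mul, ← integral_const_mul,
      ← integral_sub ((hIp.mono_set hIoo_sub).const_mul B2) ((hIp2.mono_set hIoo_sub).const_mul A)]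
    apply setIntegral_congr_fun measurableSet_Ioo
    intro y _
    ring
  rw [hv1, hv2]
  apply le_of_eq
  congr 1
  have hvnn : 0 ≤ aI*B2 - bI*A := by
    rw [hvalue]
    have := (gg_pos hθ hκ hs).le
    rw [← hp] at this
    positivity
  have hvnn2 : 0 ≤ B2*aI - A*bI := by rw [mul_comm B2 aI, mul_comm A bI]; exact hvnn
  rw [← ENNReal.ofReal_add hvnn hvnn2]
  congr 1
  linear_combination 2*hvalue

lemma step_E {ψ : ℝ → ℝ} (hψ : ContDiff ℝ (⊤ : ℕ∞) ψ) {x y : ℝ} (hy : 0 < y) (hxy : y < x) :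
    ENNReal.ofReal ((ψ x - ψ y)^2) ≤ ENNReal.ofReal (x^2 - y^2)
      * ∫⁻ s in Ioc y x, ENNReal.ofReal ((deriv ψ s)^2 / (2*s)) := by
  have hψ' : Continuous (deriv ψ) := hψ.continuous_deriv (by simp)
  have hint : Integrable (fun s => (deriv ψ s)^2/(2*s)) (volume.restrict (Ioc y x)) := by
    apply MeasureTheory.IntegrableOn.mono_set _ Ioc_subset_Icc_self
    apply ContinuousOn.integrableOn_Icc
    apply ((hψ'.continuousOn).pow 2).div
      (by fun_prop : Continuous fun s : ℝ => 2*s).continuousOn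
    intro s hs
    have : (0:ℝ) < s := lt_of_lt_of_le hy hs.1
    positivity
  have hnn : 0 ≤ᵐ[volume.restrict (Ioc y x)] fun s => (deriv ψ s)^2/(2*s) := by
    filter_upwards [ae_restrict_mem measurableSet_Ioc] with s hs
    exact div_nonneg (sq_nonneg _) (by linarith [hs.1])
  rw [← ofReal_integral_eq_lintegral_ofReal hint hnn,
    ← ENNReal.ofReal_mul (by nlinarith : (0:ℝ) ≤ x^2-y^2)]
  exact ENNReal.ofReal_le_ofReal (sq_sub_le hψ hy hxy)

theorem chi_chernoff (θ κ : ℝ) (hθ : 0 < θ) (hκ : 0 < κ)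
    (ψ : ℝ → ℝ) (hψ : ContDiff ℝ (⊤ : ℕ∞) ψ) (hb : ∃ C, ∀ x, |ψ x| ≤ C)
    (hrhs : IntegrableOn (fun x => (deriv ψ x) ^ 2 * genGammaDensity θ κ 2 x) (Ioi 0)) :
    (∫ x in Ioi (0:ℝ), ψ x ^ 2 * genGammaDensity θ κ 2 x) -
      (∫ x in Ioi (0:ℝ), ψ x * genGammaDensity θ κ 2 x) ^ 2 ≤
      (θ ^ 2 / 4) * ∫ x in Ioi (0:ℝ), (deriv ψ x) ^ 2 * genGammaDensity θ κ 2 x := by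
  classical
  obtain ⟨Cb, hCb⟩ := hb
  have hCb0 : 0 ≤ Cb := le_trans (abs_nonneg _) (hCb 0)
  set p : ℝ → ℝ := genGammaDensity θ κ 2 with hp
  have hψc : Continuous ψ := hψ.continuous
  have hψ' : Continuous (deriv ψ) := hψ.continuous_deriv (by simp)
  have hpint : IntegrableOn p (Ioi (0:ℝ)) := gg_integrableOn hθ hκ
  have hpm : Measurable p := by rw [hp]; unfold genGammaDensity; fun_prop
  have hp_nonneg : ∀ x ∈ Ioi (0:ℝ), 0 ≤ p x := fun x hx => (gg_pos hθ hκ hx).le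
  have hIψ : IntegrableOn (fun x => ψ x * p x) (Ioi (0:ℝ)) := by
    apply Integrable.bdd_mul (c := Cb) hpint hψc.aestronglyMeasurable
    exact Filter.Eventually.of_forall (fun x => by simpa [Real.norm_eq_abs] using hCb x)
  have hIψ2 : IntegrableOn (fun x => ψ x ^ 2 * p x) (Ioi (0:ℝ)) := by
    apply Integrable.bdd_mul (c := Cb^2) hpint (hψc.pow 2).aestronglyMeasurable
    refine Filter.Eventually.of_forall (fun x => ?_)
    simp only [Real.norm_eq_abs, Pi.pow_apply]
    rw [abs_pow]
    exact pow_le_pow_left₀ (abs_nonneg _) (hCb x) 2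
  set m : ℝ := ∫ x in Ioi (0:ℝ), ψ x * p x with hm
  set I2 : ℝ := ∫ x in Ioi (0:ℝ), ψ x ^ 2 * p x with hI2
  set R : ℝ := ∫ x in Ioi (0:ℝ), (deriv ψ x) ^ 2 * p x with hR
  have hRnn : 0 ≤ R := setIntegral_nonneg measurableSet_Ioi
    (fun x hx => mul_nonneg (sq_nonneg _) (hp_nonneg x hx))
  -- inner integral in closed form
  have hinner_eq : ∀ x : ℝ, ∫ y in Ioi (0:ℝ), (ψ x - ψ y)^2 * p y
      = ψ x^2 - 2*ψ x*m + I2 := by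
    intro x
    have i1 : IntegrableOn (fun y => ψ x^2 * p y) (Ioi (0:ℝ)) := hpint.const_mul _
    have i2 : IntegrableOn (fun y => 2*ψ x*(ψ y * p y)) (Ioi (0:ℝ)) := hIψ.const_mul _
    have e : (fun y => (ψ x - ψ y)^2 * p y)
        = fun y => (ψ x^2*p y - 2*ψ x*(ψ y*p y)) + ψ y^2*p y := by
      funext y; ring
    have i12 : IntegrableOn (fun y => ψ x^2*p y - 2*ψ x*(ψ y*p y)) (Ioi (0:ℝ)) := i1.sub i2
    rw [e, integral_add i12 hIψ2, integral_sub i1 i2, integral_const_mul,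
      integral_const_mul, gg_integral hθ hκ, hm, hI2]
    ring
  -- variance identity
  have hVint : IntegrableOn
      (fun x => (∫ y in Ioi (0:ℝ), (ψ x - ψ y)^2 * p y) * p x) (Ioi (0:ℝ)) := by
    apply ((hIψ2.sub (hIψ.const_mul (2*m))).add (hpint.const_mul I2)).congr
    apply Filter.Eventually.of_forall
    intro x
    simp only [Pi.add_apply, Pi.sub_apply]
    rw [hinner_eq x]
    ring
  have hV : I2 - m^2
      = (1/2) * ∫ x in Ioi (0:ℝ), (∫ y in Ioi (0:ℝ), (ψ x - ψ y)^2 * p y) * p x := by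
    have e : (fun x => (∫ y in Ioi (0:ℝ), (ψ x - ψ y)^2 * p y) * p x)
        = fun x => (ψ x^2*p x - 2*m*(ψ x*p x)) + I2*p x := by
      funext x; rw [hinner_eq x]; ring
    have i4 : IntegrableOn (fun x => ψ x^2*p x - 2*m*(ψ x*p x)) (Ioi (0:ℝ)) :=
      hIψ2.sub (hIψ.const_mul (2*m))
    rw [e, integral_add i4 (hpint.const_mul I2), integral_sub hIψ2 (hIψ.const_mul _),
      integral_const_mul, integral_const_mul, gg_integral hθ hκ, ← hm, ← hI2]
    ring
  suffices hmain : (∫ x in Ioi (0:ℝ), (∫ y in Ioi (0:ℝ), (ψ x - ψ y)^2 * p y) * p x)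
      ≤ θ^2/2 * R by
    rw [hV]
    linarith
  -- lintegral machinery
  set q : ℝ → ℝ≥0∞ := fun s => ENNReal.ofReal ((deriv ψ s)^2/(2*s)) with hq'
  have hq : Measurable q := by
    apply Measurable.ennreal_ofReal
    fun_prop
  set F : ℝ × ℝ × ℝ → ℝ≥0∞ := fun v =>
    ({u : ℝ × ℝ × ℝ | min u.1 u.2.1 < u.2.2 ∧ u.2.2 ≤ max u.1 u.2.1}.indicator
      (fun v => ENNReal.ofReal (genGammaDensity θ κ 2 v.1)
        * ENNReal.ofReal (genGammaDensity θ κ 2 v.2.1)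
        * ENNReal.ofReal (|v.1^2 - v.2.1^2|) * q v.2.2) v) with hF
  have hTmeas : MeasurableSet {u : ℝ × ℝ × ℝ | min u.1 u.2.1 < u.2.2 ∧ u.2.2 ≤ max u.1 u.2.1} := by
    apply MeasurableSet.inter
    · exact measurableSet_lt (measurable_fst.min (measurable_snd.fst)) (measurable_snd.snd)
    · exact measurableSet_le (measurable_snd.snd) (measurable_fst.max (measurable_snd.fst))
  have hFmeas : Measurable F := by
    apply Measurable.indicator _ hTmeas
    apply Measurable.fun_mul
    apply Measurable.fun_mul
    apply Measurable.fun_mul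
    · exact (hpm.comp measurable_fst).ennreal_ofReal
    · exact (hpm.comp (measurable_snd.fst)).ennreal_ofReal
    · exact (((measurable_fst.pow_const 2).sub ((measurable_snd.fst).pow_const 2)).abs).ennreal_ofReal
    · exact hq.comp (measurable_snd.snd)
  -- pointwise bound in (x, y)
  have hxy_bound : ∀ x ∈ Ioi (0:ℝ), ∀ y ∈ Ioi (0:ℝ),
      ENNReal.ofReal ((ψ x - ψ y)^2 * p y) * ENNReal.ofReal (p x)
        ≤ ∫⁻ s in Ioi (0:ℝ), F (x, y, s) := by
    intro x hx y hy
    simp only [mem_Ioi] at hx hy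
    have hFeq : ∀ w : ℝ, F (x, y, w) = (Ioc (min x y) (max x y)).indicator
        (fun w => ENNReal.ofReal (p x) * ENNReal.ofReal (p y)
          * ENNReal.ofReal (|x^2 - y^2|) * q w) w := by
      intro w
      simp only [hF, hp, Set.indicator_apply, mem_setOf_eq, mem_Ioc]
    rw [lintegral_congr fun w => hFeq w]
    rcases lt_trichotomy x y with hlt | heq | hgt
    · -- x < y
      rw [min_eq_left hlt.le, max_eq_right hlt.le]
      have hsub : Ioc x y ∩ Ioi (0:ℝ) = Ioc x y :=
        inter_eq_left.mpr (fun w hw => mem_Ioi.mpr (lt_trans hx hw.1))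
      rw [lintegral_indicator measurableSet_Ioc,
        Measure.restrict_restrict measurableSet_Ioc, hsub,
        lintegral_const_mul _ hq]
      have h1 : ENNReal.ofReal ((ψ x - ψ y)^2 * p y) * ENNReal.ofReal (p x)
          = ENNReal.ofReal (p x) * ENNReal.ofReal (p y) * ENNReal.ofReal ((ψ y - ψ x)^2) := by
        rw [ENNReal.ofReal_mul' (hp_nonneg y hy), show (ψ x - ψ y)^2 = (ψ y - ψ x)^2 by ring]
        ring
      rw [h1]
      have h2 := step_E hψ hx hlt
      calc ENNReal.ofReal (p x) * ENNReal.ofReal (p y) * ENNReal.ofReal ((ψ y - ψ x)^2)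
          ≤ ENNReal.ofReal (p x) * ENNReal.ofReal (p y)
            * (ENNReal.ofReal (y^2 - x^2) * ∫⁻ s in Ioc x y, q s) := by
            exact mul_le_mul_right h2 _
        _ = ENNReal.ofReal (p x) * ENNReal.ofReal (p y) * ENNReal.ofReal (|x^2 - y^2|)
            * ∫⁻ s in Ioc x y, q s := by
            rw [abs_of_nonpos (by nlinarith : x^2 - y^2 ≤ (0:ℝ)), neg_sub]
            ring
    · -- x = y
      subst heq
      simp [sub_self]
    · -- y < x
      rw [min_eq_right hgt.le, max_eq_left hgt.le]
      have hsub : Ioc y x ∩ Ioi (0:ℝ) = Ioc y x :=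
        inter_eq_left.mpr (fun w hw => mem_Ioi.mpr (lt_trans hy hw.1))
      rw [lintegral_indicator measurableSet_Ioc,
        Measure.restrict_restrict measurableSet_Ioc, hsub,
        lintegral_const_mul _ hq]
      have h1 : ENNReal.ofReal ((ψ x - ψ y)^2 * p y) * ENNReal.ofReal (p x)
          = ENNReal.ofReal (p x) * ENNReal.ofReal (p y) * ENNReal.ofReal ((ψ x - ψ y)^2) := by
        rw [ENNReal.ofReal_mul' (hp_nonneg y (mem_Ioi.mpr hy))]
        ring
      rw [h1]
      have h2 := step_E hψ hy hgt
      calc ENNReal.ofReal (p x) * ENNReal.ofReal (p y) * ENNReal.ofReal ((ψ x - ψ y)^2)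
          ≤ ENNReal.ofReal (p x) * ENNReal.ofReal (p y)
            * (ENNReal.ofReal (x^2 - y^2) * ∫⁻ s in Ioc y x, q s) := by
            exact mul_le_mul_right h2 _
        _ = ENNReal.ofReal (p x) * ENNReal.ofReal (p y) * ENNReal.ofReal (|x^2 - y^2|)
            * ∫⁻ s in Ioc y x, q s := by
            rw [abs_of_nonneg (by nlinarith : (0:ℝ) ≤ x^2 - y^2)]
            ring
  -- nonnegativity facts
  have hVnn2 : 0 ≤ᵐ[volume.restrict (Ioi (0:ℝ))]
      (fun x => (∫ y in Ioi (0:ℝ), (ψ x - ψ y)^2 * p y) * p x) := by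
    filter_upwards [ae_restrict_mem measurableSet_Ioi] with x hx
    apply mul_nonneg _ (hp_nonneg x hx)
    apply setIntegral_nonneg measurableSet_Ioi
    intro y hy
    exact mul_nonneg (sq_nonneg _) (hp_nonneg y hy)
  have hIinner : ∀ x : ℝ, IntegrableOn (fun y => (ψ x - ψ y)^2 * p y) (Ioi (0:ℝ)) := by
    intro x
    apply Integrable.bdd_mul (c := (|ψ x| + Cb)^2) hpint
      (Continuous.aestronglyMeasurable (((continuous_const.sub hψc).pow 2)))
    refine Filter.Eventually.of_forall (fun y => ?_)
    simp only [Real.norm_eq_abs, Pi.pow_apply, Pi.sub_apply]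
    rw [abs_pow]
    apply pow_le_pow_left₀ (abs_nonneg _) _ 2
    rw [sub_eq_add_neg]
    refine (abs_add_le _ _).trans ?_
    rw [abs_neg]
    exact add_le_add le_rfl (hCb y)
  have hnn_inner : ∀ x : ℝ, 0 ≤ᵐ[volume.restrict (Ioi (0:ℝ))]
      fun y => (ψ x - ψ y)^2 * p y := by
    intro x
    filter_upwards [ae_restrict_mem measurableSet_Ioi] with y hy
    exact mul_nonneg (sq_nonneg _) (hp_nonneg y hy)
  -- the main lintegral chain
  have hchain : ENNReal.ofReal (∫ x in Ioi (0:ℝ), (∫ y in Ioi (0:ℝ), (ψ x - ψ y)^2 * p y) * p x)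
      ≤ ENNReal.ofReal (θ^2/2 * R) := by
    rw [ofReal_integral_eq_lintegral_ofReal hVint hVnn2]
    have step1 : ∫⁻ x in Ioi (0:ℝ), ENNReal.ofReal ((∫ y in Ioi (0:ℝ), (ψ x - ψ y)^2 * p y) * p x)
        ≤ ∫⁻ x in Ioi (0:ℝ), ∫⁻ y in Ioi (0:ℝ), ∫⁻ s in Ioi (0:ℝ), F (x, y, s) := by
      apply lintegral_mono_ae
      filter_upwards [ae_restrict_mem measurableSet_Ioi] with x hx
      rw [ENNReal.ofReal_mul' (hp_nonneg x hx),
        ofReal_integral_eq_lintegral_ofReal (hIinner x) (hnn_inner x),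
        ← lintegral_mul_const' (ENNReal.ofReal (p x)) _ ENNReal.ofReal_ne_top]
      apply lintegral_mono_ae
      filter_upwards [ae_restrict_mem measurableSet_Ioi] with y hy
      exact hxy_bound x hx y hy
    refine le_trans step1 ?_
    have hswap1 : ∀ x : ℝ, (∫⁻ y in Ioi (0:ℝ), ∫⁻ s in Ioi (0:ℝ), F (x, y, s))
        = ∫⁻ s in Ioi (0:ℝ), ∫⁻ y in Ioi (0:ℝ), F (x, y, s) := fun x =>
      lintegral_lintegral_swap ((hFmeas.comp measurable_prodMk_left).aemeasurable)
    have hswap2 : (∫⁻ x in Ioi (0:ℝ), ∫⁻ s in Ioi (0:ℝ), ∫⁻ y in Ioi (0:ℝ), F (x, y, s))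
        = ∫⁻ s in Ioi (0:ℝ), ∫⁻ x in Ioi (0:ℝ), ∫⁻ y in Ioi (0:ℝ), F (x, y, s) := by
      apply lintegral_lintegral_swap
      apply Measurable.aemeasurable
      apply Measurable.lintegral_prod_right
      exact hFmeas.comp ((measurable_fst.fst).prodMk ((measurable_snd).prodMk (measurable_fst.snd)))
    rw [lintegral_congr hswap1, hswap2]
    have step2 : (∫⁻ s in Ioi (0:ℝ), ∫⁻ x in Ioi (0:ℝ), ∫⁻ y in Ioi (0:ℝ), F (x, y, s))
        ≤ ∫⁻ s in Ioi (0:ℝ), q s * ENNReal.ofReal (θ^2 * (s * p s)) := by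
      apply lintegral_mono_ae
      filter_upwards [ae_restrict_mem measurableSet_Ioi] with s hs
      simp only [mem_Ioi] at hs
      have := inner_double hθ hκ hq hs
      simpa [hF] using this
    refine le_trans step2 ?_
    have step3 : (∫⁻ s in Ioi (0:ℝ), q s * ENNReal.ofReal (θ^2 * (s * p s)))
        = ∫⁻ s in Ioi (0:ℝ), ENNReal.ofReal (θ^2/2 * ((deriv ψ s)^2 * p s)) := by
      apply setLIntegral_congr_fun measurableSet_Ioi
      intro s hs
      simp only [mem_Ioi] at hs
      rw [hq']
      beta_reduce
      rw [← ENNReal.ofReal_mul (div_nonneg (sq_nonneg _) (by linarith))]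
      congr 1
      field_simp
    rw [step3, ← ofReal_integral_eq_lintegral_ofReal ((hrhs.const_mul (θ^2/2)))]
    · apply ENNReal.ofReal_le_ofReal
      apply le_of_eq
      rw [hR, ← integral_const_mul]
    · filter_upwards [ae_restrict_mem measurableSet_Ioi] with s hs
      exact mul_nonneg (by positivity) (mul_nonneg (sq_nonneg _) (hp_nonneg s hs))
  exact (ENNReal.ofReal_le_ofReal_iff (mul_nonneg (by positivity) hRnn)).mp hchain

end
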